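/- arXiv:1701.05879 — 2 statements merged into one kernel-verified Lean document; each statement's English description precedes it below -/
import Mathlib

section
/- For every ε ∈ {1,−1} and ν ∈ ℂ, the Casimir operator Ω = H∘H − 2H + 4(E∘F) of the principal series module π(ε,ν) acts on V_ε as the scalar ν² − 1, i.e. Ω v = (ν²−1)·v for all v ∈ V_ε. -/
/-!
`H`, `E`, `F` are weighted shifts `v_j ↦ c j • v_{j+s}`, and weighted shifts compose and combine
by acting on their weights. So `Ω` is the weighted shift of step `0` whose weight at `v_j` is
`j² - 2j + (ν - j + 1)(ν + j - 1) = ν² - 1`.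
-/

namespace SL2Deform

/-- The index set `ℤ_ε = {j : ℤ | (-1)^j = ε}`, for a sign `ε ∈ {1, -1}`
(i.e. a unit of `ℤ`). -/
abbrev idx (ε : ℤˣ) : Type := {j : ℤ // (-1 : ℤˣ) ^ j = ε}

/-- `V ε`: the complex vector space of finitely supported functions on `ℤ_ε`,
with standard basis `{v_j}`. -/
abbrev V (ε : ℤˣ) : Type := idx ε →₀ ℂ

/-- The standard basis vector `v_j` of `V ε`, for `j ∈ ℤ_ε`. -/
noncomputable def bv (ε : ℤˣ) (j : ℤ) (h : (-1 : ℤˣ) ^ j = ε) : V ε :=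
  Finsupp.single ⟨j, h⟩ 1

lemma parity_two : (-1 : ℤˣ) ^ (2 : ℤ) = 1 := by decide
lemma parity_neg_two : (-1 : ℤˣ) ^ (-2 : ℤ) = 1 := by decide
lemma parity_zero : (-1 : ℤˣ) ^ (0 : ℤ) = 1 := by decide

lemma parity_shift {ε : ℤˣ} {j : ℤ} (h : (-1 : ℤˣ) ^ j = ε) {s : ℤ}
    (hs : (-1 : ℤˣ) ^ s = 1) : (-1 : ℤˣ) ^ (j + s) = ε := by
  rw [zpow_add, h, hs, mul_one]

/-- If `m ∈ ℤ_{-ε}` then `m + 1 ∈ ℤ_ε`. -/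
lemma parity_succ {ε : ℤˣ} {m : ℤ} (h : (-1 : ℤˣ) ^ m = -ε) :
    (-1 : ℤˣ) ^ (m + 1) = ε := by
  rw [zpow_add, h, zpow_one]
  simp

/-- If `m ∈ ℤ_{-ε}` then `m - 1 ∈ ℤ_ε`. -/
lemma parity_pred {ε : ℤˣ} {m : ℤ} (h : (-1 : ℤˣ) ^ m = -ε) :
    (-1 : ℤˣ) ^ (m - 1) = ε := by
  rw [sub_eq_add_neg, zpow_add, h, zpow_neg, zpow_one]
  simp

/-- The linear operator on `V ε` sending `v_j` to `c j • v_{j+s}`,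
for an even shift `s`. -/
noncomputable def shiftOp (ε : ℤˣ) (s : ℤ) (hs : (-1 : ℤˣ) ^ s = 1) (c : ℤ → ℂ) :
    V ε →ₗ[ℂ] V ε :=
  Finsupp.lsum ℂ fun j =>
    LinearMap.toSpanSingleton ℂ (V ε)
      (Finsupp.single ⟨j.1 + s, parity_shift j.2 hs⟩ (c j.1))

/-- `H v_j = j • v_j`. -/
noncomputable def Hop (ε : ℤˣ) : V ε →ₗ[ℂ] V ε :=
  shiftOp ε 0 parity_zero fun j => (j : ℂ)

/-- Principal series: `E v_j = ½(ν + j + 1) • v_{j+2}`. -/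
noncomputable def Eop (ε : ℤˣ) (ν : ℂ) : V ε →ₗ[ℂ] V ε :=
  shiftOp ε 2 parity_two fun j => (1 / 2 : ℂ) * (ν + j + 1)

/-- Principal series: `F v_j = ½(ν - j + 1) • v_{j-2}`. -/
noncomputable def Fop (ε : ℤˣ) (ν : ℂ) : V ε →ₗ[ℂ] V ε :=
  shiftOp ε (-2) parity_neg_two fun j => (1 / 2 : ℂ) * (ν - j + 1)

/-- `f_m(ν) = ½ |ν²-m²|^{1/2} (ν+m)/|ν+m|` for `ν ≠ -m`, and `f_m(-m) = 0`. -/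
noncomputable def fm (m : ℤ) (ν : ℂ) : ℂ :=
  if ν = -(m : ℂ) then 0
  else (1 / 2 : ℂ) * (Real.sqrt (‖ν ^ 2 - (m : ℂ) ^ 2‖) : ℝ) * (ν + m) /
    (‖ν + (m : ℂ)‖ : ℝ)

/-- Deformed module: `E v_{m-1} = f_m(ν) • v_{m+1}`, i.e. `E v_j = f_{j+1}(ν) • v_{j+2}`. -/
noncomputable def PEop (ε : ℤˣ) (ν : ℂ) : V ε →ₗ[ℂ] V ε :=
  shiftOp ε 2 parity_two fun j => fm (j + 1) ν

/-- Deformed module: `F v_{m+1} = f_{-m}(ν) • v_{m-1}`, i.e. `F v_j = f_{-(j-1)}(ν) • v_{j-2}`. -/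
noncomputable def PFop (ε : ℤˣ) (ν : ℂ) : V ε →ₗ[ℂ] V ε :=
  shiftOp ε (-2) parity_neg_two fun j => fm (1 - j) ν

/-- The module `π'(ε,ν)`: `E v_{m-1} = ½(ν - |m|) • v_{m+1}`,
i.e. `E v_j = ½(ν - |j+1|) • v_{j+2}`. -/
noncomputable def E'op (ε : ℤˣ) (ν : ℂ) : V ε →ₗ[ℂ] V ε :=
  shiftOp ε 2 parity_two fun j => (1 / 2 : ℂ) * (ν - ((|j + 1| : ℤ) : ℂ))

/-- The module `π'(ε,ν)`: `F v_{m+1} = ½(ν + |m|) • v_{m-1}`,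
i.e. `F v_j = ½(ν + |j-1|) • v_{j-2}`. -/
noncomputable def F'op (ε : ℤˣ) (ν : ℂ) : V ε →ₗ[ℂ] V ε :=
  shiftOp ε (-2) parity_neg_two fun j => (1 / 2 : ℂ) * (ν + ((|j - 1| : ℤ) : ℂ))

/-- `ν ∈ ℤ_{-ε}`: `ν` is an integer with `(-1)^ν = -ε`. -/
def inZminus (ε : ℤˣ) (ν : ℂ) : Prop :=
  ∃ n : ℤ, ν = (n : ℂ) ∧ (-1 : ℤˣ) ^ n = -ε

section ModuleNotions

variable {M : Type*} [AddCommGroup M] [Module ℂ M]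
variable {N : Type*} [AddCommGroup N] [Module ℂ N]

/-- `W` is a submodule for the module with operators `A, B, C`: it is invariant
under all three operators. -/
def Invariant (A B C : M →ₗ[ℂ] M) (W : Submodule ℂ M) : Prop :=
  (∀ x ∈ W, A x ∈ W) ∧ (∀ x ∈ W, B x ∈ W) ∧ (∀ x ∈ W, C x ∈ W)

/-- The module with operators `A, B, C` is irreducible: its only submodules are
`0` and the whole space. -/
def IsIrreducibleRep (A B C : M →ₗ[ℂ] M) : Prop :=
  ∀ W : Submodule ℂ M, Invariant A B C W → W = ⊥ ∨ W = ⊤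

/-- `W` is an irreducible submodule: invariant, nonzero, and with no nonzero
proper invariant subspace. -/
def IsIrreducibleSubmodule (A B C : M →ₗ[ℂ] M) (W : Submodule ℂ M) : Prop :=
  Invariant A B C W ∧ W ≠ ⊥ ∧
    ∀ U : Submodule ℂ M, Invariant A B C U → U ≤ W → U = ⊥ ∨ U = W

/-- The module with operators `A, B, C` is completely reducible: every invariant
subspace has an invariant complement. -/
def CompletelyReducible (A B C : M →ₗ[ℂ] M) : Prop :=
  ∀ W : Submodule ℂ M, Invariant A B C W →
    ∃ U : Submodule ℂ M, Invariant A B C U ∧ IsCompl W U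

/-- The two modules (given by operator triples) are isomorphic. -/
def Intertwined (A B C : M →ₗ[ℂ] M) (A' B' C' : N →ₗ[ℂ] N) : Prop :=
  ∃ e : M ≃ₗ[ℂ] N, (∀ x, e (A x) = A' (e x)) ∧ (∀ x, e (B x) = B' (e x)) ∧
    (∀ x, e (C x) = C' (e x))

/-- An invariant Hermitian form for the module with operators `A, B, C`
(`A` playing the role of `H`, `B` of `E`, `C` of `F`): a sesquilinear form,
conjugate-symmetric, with `⟨Hv,w⟩ = ⟨v,Hw⟩`, `⟨Ev,w⟩ + ⟨v,Fw⟩ = 0`,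
`⟨Fv,w⟩ + ⟨v,Ew⟩ = 0`. -/
structure IsInvHermForm (A B C : M →ₗ[ℂ] M) (Φ : M → M → ℂ) : Prop where
  add_left : ∀ u v w, Φ (u + v) w = Φ u w + Φ v w
  smul_left : ∀ (a : ℂ) (v w : M), Φ (a • v) w = a * Φ v w
  conj_symm : ∀ v w, Φ w v = (starRingEnd ℂ) (Φ v w)
  inv_A : ∀ v w, Φ (A v) w = Φ v (A w)
  inv_BC : ∀ v w, Φ (B v) w + Φ v (C w) = 0
  inv_CB : ∀ v w, Φ (C v) w + Φ v (B w) = 0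

end ModuleNotions

/-- `span{v_j : j ≥ n}`. -/
noncomputable def spanGE (ε : ℤˣ) (n : ℤ) : Submodule ℂ (V ε) :=
  Submodule.span ℂ {x : V ε | ∃ j : idx ε, n ≤ j.1 ∧ x = Finsupp.single j 1}

/-- `span{v_j : j ≤ n}`. -/
noncomputable def spanLE (ε : ℤˣ) (n : ℤ) : Submodule ℂ (V ε) :=
  Submodule.span ℂ {x : V ε | ∃ j : idx ε, j.1 ≤ n ∧ x = Finsupp.single j 1}

/-- `span{v_j : |j| ≤ n}`. -/
noncomputable def spanAbsLE (ε : ℤˣ) (n : ℤ) : Submodule ℂ (V ε) :=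
  Submodule.span ℂ {x : V ε | ∃ j : idx ε, |j.1| ≤ n ∧ x = Finsupp.single j 1}

/-- The diagonal operator `S v_j = c j • v_j`. -/
noncomputable def diagMap (ε : ℤˣ) (c : idx ε → ℂ) : V ε →ₗ[ℂ] V ε :=
  Finsupp.lsum ℂ fun j => LinearMap.toSpanSingleton ℂ (V ε) (Finsupp.single j (c j))

section ShiftOp

variable {ε : ℤˣ} {s : ℤ} (hs : (-1 : ℤˣ) ^ s = 1)

lemma shiftOp_single (c : ℤ → ℂ) (j : idx ε) (a : ℂ) :
    shiftOp ε s hs c (Finsupp.single j a)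
      = Finsupp.single ⟨j.1 + s, parity_shift j.2 hs⟩ (a * c j.1) := by
  simp [shiftOp, Finsupp.smul_single]

lemma shiftOp_comp_shiftOp {t u : ℤ} (ht : (-1 : ℤˣ) ^ t = 1) (hu : (-1 : ℤˣ) ^ u = 1)
    (htsu : t + s = u) (c d : ℤ → ℂ) :
    shiftOp ε s hs c ∘ₗ shiftOp ε t ht d = shiftOp ε u hu fun j => d j * c (j + t) := by
  subst htsu
  refine Finsupp.lhom_ext fun j a => ?_
  simp only [LinearMap.comp_apply, shiftOp_single, add_assoc, mul_assoc]

lemma shiftOp_add (c d : ℤ → ℂ) :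
    shiftOp ε s hs c + shiftOp ε s hs d = shiftOp ε s hs (c + d) := by
  refine Finsupp.lhom_ext fun j a => ?_
  simp only [LinearMap.add_apply, shiftOp_single, Pi.add_apply, mul_add, Finsupp.single_add]

lemma shiftOp_sub (c d : ℤ → ℂ) :
    shiftOp ε s hs c - shiftOp ε s hs d = shiftOp ε s hs (c - d) := by
  refine Finsupp.lhom_ext fun j a => ?_
  simp only [LinearMap.sub_apply, shiftOp_single, Pi.sub_apply, mul_sub, Finsupp.single_sub]

lemma smul_shiftOp (a : ℂ) (c : ℤ → ℂ) :
    a • shiftOp ε s hs c = shiftOp ε s hs (a • c) := by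
  refine Finsupp.lhom_ext fun j b => ?_
  simp only [LinearMap.smul_apply, shiftOp_single, Pi.smul_apply, Finsupp.smul_single,
    smul_eq_mul, mul_left_comm]

end ShiftOp

lemma shiftOp_zero_const (ε : ℤˣ) (hs : (-1 : ℤˣ) ^ (0 : ℤ) = 1) (a : ℂ) :
    shiftOp ε 0 hs (fun _ => a) = a • LinearMap.id := by
  refine Finsupp.lhom_ext fun j b => ?_
  simp [shiftOp_single, Finsupp.smul_single, mul_comm]

/-- The Casimir operator `Ω = H∘H - 2H + 4(E∘F)` of the principal series
module `π(ε,ν)` acts on `V ε` as the scalar `ν² - 1`. -/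
theorem principal_series_casimir (ε : ℤˣ) (ν : ℂ) :
    ∀ v : V ε,
      (Hop ε ∘ₗ Hop ε - (2 : ℂ) • Hop ε + (4 : ℂ) • (Eop ε ν ∘ₗ Fop ε ν)) v
        = (ν ^ 2 - 1) • v := by
  have casimir_eq :
      Hop ε ∘ₗ Hop ε - (2 : ℂ) • Hop ε + (4 : ℂ) • (Eop ε ν ∘ₗ Fop ε ν)
        = shiftOp ε 0 parity_zero fun _ => ν ^ 2 - 1 := by
    rw [Hop, Eop, Fop, shiftOp_comp_shiftOp _ parity_zero parity_zero (add_zero 0),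
      shiftOp_comp_shiftOp _ parity_neg_two parity_zero (neg_add_cancel 2), smul_shiftOp,
      smul_shiftOp, shiftOp_sub, shiftOp_add]
    congr 1
    funext j
    simp only [Pi.add_apply, Pi.sub_apply, Pi.smul_apply, smul_eq_mul]
    push_cast
    ring
  intro v
  rw [casimir_eq, shiftOp_zero_const]
  rfl

end SL2Deform
end

section
/- Let ν ∈ ℝ with ν ∉ ℤ_{−ε}, and let ⟨·,·⟩ be an invariant Hermitian form on the deformed module Π(ε,ν) normalized so that ⟨v_0,v_0⟩ = 1 (when ε = 1) or ⟨v_1,v_1⟩ = 1 (when ε = −1). Then ⟨v_i,v_j⟩ = 0 for i ≠ j, and for every m ∈ ℤ_{−ε} one has ⟨v_{m+1}, v_{m+1}⟩ = −sgn(ν² − m²)·⟨v_{m−1}, v_{m−1}⟩; consequently ⟨v_j, v_j⟩ ∈ {1, −1} for every j ∈ ℤ_ε. -/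
namespace Real

theorem sign_mul (x y : ℝ) : sign (x * y) = sign x * sign y := by
  rcases lt_trichotomy x 0 with hx | hx | hx <;> rcases lt_trichotomy y 0 with hy | hy | hy <;>
    simp [sign_of_neg, sign_of_pos, sign_zero, hx, hy, mul_pos_of_neg_of_neg,
      mul_neg_of_neg_of_pos, mul_neg_of_pos_of_neg]

theorem div_abs_eq_sign (x : ℝ) : x / |x| = sign x := by
  rcases lt_trichotomy x 0 with hx | rfl | hx
  · rw [abs_of_neg hx, sign_of_neg hx, div_neg, div_self hx.ne]
  · simp [sign_zero]
  · rw [abs_of_pos hx, sign_of_pos hx, div_self hx.ne']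

end Real

namespace SL2Deform

section Basis

variable {ε : ℤˣ}

lemma bv_congr {j j' : ℤ} (e : j = j') (h : (-1 : ℤˣ) ^ j = ε) (h' : (-1 : ℤˣ) ^ j' = ε) :
    bv ε j h = bv ε j' h' := by
  subst e; rfl

lemma parity_add_one {j : ℤ} (h : (-1 : ℤˣ) ^ j = ε) : (-1 : ℤˣ) ^ (j + 1) = -ε := by
  rw [zpow_add, h, zpow_one, mul_neg_one]

lemma even_sub_of_idx (i j : idx ε) : Even (i.1 - j.1) := by
  have h : (-1 : ℤˣ) ^ (i.1 - j.1) = 1 := by rw [zpow_sub, i.2, j.2, mul_inv_cancel]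
  rw [neg_one_zpow_eq_ite] at h
  split_ifs at h with he
  · exact he
  · exact absurd h (by decide)

theorem idx_apply_eq_of_add_two {α : Type*} (g : idx ε → α)
    (hg : ∀ j : idx ε, g ⟨j.1 + 2, parity_shift j.2 parity_two⟩ = g j) (i j : idx ε) :
    g i = g j := by
  obtain ⟨k, hk⟩ := even_sub_of_idx i j
  have hpar : ∀ n : ℤ, (-1 : ℤˣ) ^ (j.1 + n * 2) = ε := fun n =>
    parity_shift j.2 (by rw [mul_comm, zpow_mul, parity_two, one_zpow])
  set G : ℤ → α := fun n => g ⟨j.1 + n * 2, hpar n⟩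
  have hG : Function.Periodic G 1 := fun n => by
    simp only [G, ← hg ⟨j.1 + n * 2, hpar n⟩]
    congr 2
    ring
  calc g i = G k := congrArg g (Subtype.ext (show i.1 = j.1 + k * 2 by omega))
    _ = G 0 := by simpa using hG.int_mul_eq k
    _ = g j := congrArg g (Subtype.ext (show j.1 + 0 * 2 = j.1 by ring))

lemma sq_ne_of_not_inZminus {ν : ℝ} (hν : ¬ inZminus ε ν) {m : ℤ}
    (hm : (-1 : ℤˣ) ^ m = -ε) : ν ^ 2 ≠ (m : ℝ) ^ 2 := by
  intro h
  rcases sq_eq_sq_iff_eq_or_eq_neg.1 h with h | h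
  · exact hν ⟨m, by exact_mod_cast h, hm⟩
  · refine hν ⟨-m, by push_cast; exact_mod_cast h, ?_⟩
    rw [zpow_neg, hm, Int.units_inv_eq_self]

lemma shiftOp_bv (s : ℤ) (hs : (-1 : ℤˣ) ^ s = 1) (c : ℤ → ℂ) (j : ℤ)
    (h : (-1 : ℤˣ) ^ j = ε) :
    shiftOp ε s hs c (bv ε j h) = c j • bv ε (j + s) (parity_shift h hs) := by
  simp only [shiftOp, bv, Finsupp.lsum_single, LinearMap.toSpanSingleton_apply, one_smul,
    Finsupp.smul_single', mul_one]

lemma Hop_single (j : idx ε) : Hop ε (Finsupp.single j 1) = (j.1 : ℂ) • Finsupp.single j 1 :=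
  (shiftOp_bv 0 parity_zero _ j.1 j.2).trans (by rw [bv_congr (add_zero j.1) _ j.2]; rfl)

lemma PEop_bv (ν : ℂ) {m : ℤ} (hm : (-1 : ℤˣ) ^ m = -ε) :
    PEop ε ν (bv ε (m - 1) (parity_pred hm)) = fm m ν • bv ε (m + 1) (parity_succ hm) := by
  rw [PEop, shiftOp_bv, sub_add_cancel, bv_congr (by ring) _ (parity_succ hm)]

lemma PFop_bv (ν : ℂ) {m : ℤ} (hm : (-1 : ℤˣ) ^ m = -ε) :
    PFop ε ν (bv ε (m + 1) (parity_succ hm)) = fm (-m) ν • bv ε (m - 1) (parity_pred hm) := by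
  rw [PFop, shiftOp_bv, show 1 - (m + 1) = -m by ring, bv_congr (by ring) _ (parity_pred hm)]

end Basis

-- Also valid at `ν = -m`, where both sides vanish because `Real.sign 0 = 0`.
lemma fm_ofReal (m : ℤ) (ν : ℝ) :
    fm m ν = ((√|ν ^ 2 - m ^ 2| * Real.sign (ν + m) / 2 : ℝ) : ℂ) := by
  rw [fm]
  split_ifs with h
  · have : ν + m = 0 := by exact_mod_cast (add_eq_zero_iff_eq_neg.2 h)
    simp [this, Real.sign_zero]
  · have hsq : (ν : ℂ) ^ 2 - (m : ℂ) ^ 2 = ((ν ^ 2 - m ^ 2 : ℝ) : ℂ) := by push_cast; ring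
    have hadd : (ν : ℂ) + (m : ℂ) = ((ν + m : ℝ) : ℂ) := by push_cast; ring
    rw [hsq, hadd, Complex.norm_real, Complex.norm_real, Real.norm_eq_abs, Real.norm_eq_abs,
      ← Real.div_abs_eq_sign]
    push_cast
    ring

lemma fm_neg_ofReal (m : ℤ) (ν : ℝ) :
    fm (-m) ν = (Real.sign (ν ^ 2 - m ^ 2) : ℂ) * fm m ν := by
  rw [fm_ofReal, fm_ofReal, ← Complex.ofReal_mul, Int.cast_neg, neg_sq, ← sub_eq_add_neg]
  congr 1
  have hfac : ν ^ 2 - (m : ℝ) ^ 2 = (ν - m) * (ν + m) := by ring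
  by_cases h : ν + m = 0
  · simp [hfac, h]
  · have hsign : Real.sign (ν + m) * Real.sign (ν + m) = 1 := by
      rcases Real.sign_apply_eq_of_ne_zero _ h with hs | hs <;> rw [hs] <;> norm_num
    rw [hfac, Real.sign_mul]
    linear_combination -(√|(ν - m) * (ν + m)| * Real.sign (ν - m) / 2) * hsign

lemma fm_ne_zero {m : ℤ} {ν : ℝ} (hνm : ν ^ 2 ≠ (m : ℝ) ^ 2) : fm m ν ≠ 0 := by
  have hadd : ν + m ≠ 0 := fun h => hνm (by rw [eq_neg_of_add_eq_zero_left h, neg_sq])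
  have hsqrt : √|ν ^ 2 - m ^ 2| ≠ 0 := (Real.sqrt_pos.2 (abs_pos.2 (sub_ne_zero.2 hνm))).ne'
  rw [fm_ofReal, Complex.ofReal_ne_zero]
  exact div_ne_zero (mul_ne_zero hsqrt (Real.sign_eq_zero_iff.not.2 hadd)) two_ne_zero

namespace IsInvHermForm

section General

variable {M : Type*} [AddCommGroup M] [Module ℂ M] {A B C : M →ₗ[ℂ] M} {Φ : M → M → ℂ}

theorem smul_right (hΦ : IsInvHermForm A B C Φ) (a : ℂ) (v w : M) :
    Φ v (a • w) = starRingEnd ℂ a * Φ v w := by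
  rw [hΦ.conj_symm, hΦ.smul_left, map_mul, ← hΦ.conj_symm]

theorem apply_eq_zero_of_eigenvalue_ne (hΦ : IsInvHermForm A B C Φ) {v w : M} {a b : ℝ}
    (hv : A v = (a : ℂ) • v) (hw : A w = (b : ℂ) • w) (hab : a ≠ b) : Φ v w = 0 := by
  have h := hΦ.inv_A v w
  rw [hv, hw, hΦ.smul_left, hΦ.smul_right, Complex.conj_ofReal] at h
  have h' : ((a : ℂ) - b) * Φ v w = 0 := by linear_combination h
  exact (mul_eq_zero.1 h').resolve_left (sub_ne_zero.2 (by exact_mod_cast hab))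

end General

section DeformedModule

variable {ε : ℤˣ} {ν : ℝ} {Φ : V ε → V ε → ℂ}

theorem apply_bv_succ (hΦ : IsInvHermForm (Hop ε) (PEop ε ν) (PFop ε ν) Φ)
    {m : ℤ} (hm : (-1 : ℤˣ) ^ m = -ε) (hνm : ν ^ 2 ≠ (m : ℝ) ^ 2) :
    Φ (bv ε (m + 1) (parity_succ hm)) (bv ε (m + 1) (parity_succ hm)) =
      -((Real.sign (ν ^ 2 - (m : ℝ) ^ 2) : ℝ) : ℂ) *
        Φ (bv ε (m - 1) (parity_pred hm)) (bv ε (m - 1) (parity_pred hm)) := by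
  have h := hΦ.inv_BC (bv ε (m - 1) (parity_pred hm)) (bv ε (m + 1) (parity_succ hm))
  rw [PEop_bv _ hm, PFop_bv _ hm, hΦ.smul_left, hΦ.smul_right, fm_neg_ofReal, map_mul,
    Complex.conj_ofReal, fm_ofReal, Complex.conj_ofReal, ← fm_ofReal] at h
  apply mul_left_cancel₀ (fm_ne_zero hνm)
  linear_combination h

theorem apply_single_add_two_sq (hΦ : IsInvHermForm (Hop ε) (PEop ε ν) (PFop ε ν) Φ)
    (hν : ¬ inZminus ε ν) (j : idx ε) :
    Φ (Finsupp.single ⟨j.1 + 2, parity_shift j.2 parity_two⟩ 1)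
        (Finsupp.single ⟨j.1 + 2, parity_shift j.2 parity_two⟩ 1) ^ 2 =
      Φ (Finsupp.single j 1) (Finsupp.single j 1) ^ 2 := by
  have hm := parity_add_one j.2
  have hνm := sq_ne_of_not_inZminus hν hm
  have hsign : Real.sign (ν ^ 2 - ((j.1 + 1 : ℤ) : ℝ) ^ 2) ^ 2 = 1 := by
    rcases Real.sign_apply_eq_of_ne_zero _ (sub_ne_zero.2 hνm) with h | h <;> rw [h] <;> norm_num
  have h := hΦ.apply_bv_succ hm hνm
  rw [bv_congr (by ring : j.1 + 1 + 1 = j.1 + 2) _ (parity_shift j.2 parity_two),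
    bv_congr (add_sub_cancel_right j.1 1) _ j.2] at h
  rw [← bv, ← bv, h, mul_pow, neg_sq, ← Complex.ofReal_pow, hsign, Complex.ofReal_one, one_mul]

end DeformedModule

end IsInvHermForm

/-- For real `ν ∉ ℤ_{-ε}` and an invariant Hermitian form on `Π(ε,ν)`
normalized by `⟨v_0,v_0⟩ = 1` (when `ε = 1`) or `⟨v_1,v_1⟩ = 1` (when `ε = -1`):
`⟨v_i,v_j⟩ = 0` for `i ≠ j`; for every `m ∈ ℤ_{-ε}`,
`⟨v_{m+1}, v_{m+1}⟩ = -sgn(ν² - m²)·⟨v_{m-1}, v_{m-1}⟩`; and `⟨v_j,v_j⟩ = ±1`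
for every `j ∈ ℤ_ε`. -/
theorem deformed_herm_form_signs (ε : ℤˣ) (ν : ℝ) (hν : ¬ inZminus ε (ν : ℂ))
    (Φ : V ε → V ε → ℂ)
    (hΦ : IsInvHermForm (Hop ε) (PEop ε (ν : ℂ)) (PFop ε (ν : ℂ)) Φ)
    (hnorm0 : ∀ h : (-1 : ℤˣ) ^ (0 : ℤ) = ε, Φ (bv ε 0 h) (bv ε 0 h) = 1)
    (hnorm1 : ∀ h : (-1 : ℤˣ) ^ (1 : ℤ) = ε, Φ (bv ε 1 h) (bv ε 1 h) = 1) :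
    (∀ i j : idx ε, i ≠ j → Φ (Finsupp.single i 1) (Finsupp.single j 1) = 0) ∧
    (∀ (m : ℤ) (hm : (-1 : ℤˣ) ^ m = -ε),
      Φ (bv ε (m + 1) (parity_succ hm)) (bv ε (m + 1) (parity_succ hm)) =
        -((Real.sign (ν ^ 2 - (m : ℝ) ^ 2) : ℝ) : ℂ) *
          Φ (bv ε (m - 1) (parity_pred hm)) (bv ε (m - 1) (parity_pred hm))) ∧
    (∀ j : idx ε, Φ (Finsupp.single j 1) (Finsupp.single j 1) = 1 ∨
      Φ (Finsupp.single j 1) (Finsupp.single j 1) = -1) := by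
  refine ⟨fun i j hij => ?_, fun m hm => hΦ.apply_bv_succ hm (sq_ne_of_not_inZminus hν hm),
    fun j => ?_⟩
  · refine hΦ.apply_eq_zero_of_eigenvalue_ne (a := i.1) (b := j.1) ?_ ?_ ?_
    · rw [Hop_single, Complex.ofReal_intCast]
    · rw [Hop_single, Complex.ofReal_intCast]
    · exact_mod_cast Subtype.coe_injective.ne hij
  · obtain ⟨j₀, hj₀⟩ : ∃ j₀ : idx ε, Φ (Finsupp.single j₀ 1) (Finsupp.single j₀ 1) = 1 := by
      rcases Int.units_eq_one_or ε with rfl | rfl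
      exacts [⟨⟨0, parity_zero⟩, hnorm0 _⟩, ⟨⟨1, zpow_one _⟩, hnorm1 _⟩]
    rw [← sq_eq_one_iff, idx_apply_eq_of_add_two (fun j => Φ (Finsupp.single j 1)
      (Finsupp.single j 1) ^ 2) (hΦ.apply_single_add_two_sq hν) j j₀, hj₀, one_pow]

end SL2Deform
end
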